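/- arXiv:2409.05577 — 3 statements merged into one kernel-verified Lean document; each statement's English description precedes it below -/
import Mathlib

section
/- Let n ∈ ℕ and define the n × n matrix U_n by (U_n)_{i,j} = C(n - i, j - 1) if i + j ≤ n + 1 and 0 otherwise (indices 1 ≤ i, j ≤ n). Then U_n is invertible and its inverse is given by (U_n^{-1})_{i,j} = (-1)^{n+1+i+j} (U_n)_{n+1-i, n+1-j}. -/
/-!
Indexing from 0, `U = J P` where `P = (C(i, j))` is the lower triangular Pascal matrix and `J`
reverses the rows. The inverse of `P` is `Q = ((-1)^(i+j) C(i, j))`, by the orthogonality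
`∑ⱼ (-1)^(j+b) C(a, j) C(j, b) = δ_ab`, which after `C(a, j) C(j, b) = C(a, b) C(a-b, j-b)` is the
alternating row sum of Pascal's triangle. Hence `U⁻¹ = Q J`, whose entries are the claimed ones.
-/

open Finset Matrix

theorem sum_range_neg_one_pow_mul_choose_mul_choose (a b : ℕ) :
    ∑ j ∈ range (a + 1), (-1 : ℤ) ^ (j + b) * (a.choose j * j.choose b) =
      if a = b then 1 else 0 := by
  rcases lt_or_ge a b with hab | hba
  · rw [if_neg hab.ne]
    refine sum_eq_zero fun j hj => ?_
    rw [Nat.choose_eq_zero_of_lt (lt_of_le_of_lt (Nat.lt_succ_iff.mp (mem_range.mp hj)) hab)]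
    simp
  obtain ⟨d, rfl⟩ := Nat.exists_eq_add_of_le hba
  have below : ∀ j ∈ range b,
      (-1 : ℤ) ^ (j + b) * ((b + d).choose j * j.choose b) = 0 := fun j hj => by
    rw [Nat.choose_eq_zero_of_lt (mem_range.mp hj)]
    simp
  have above : ∀ t ∈ range (d + 1),
      (-1 : ℤ) ^ (b + t + b) * ((b + d).choose (b + t) * (b + t).choose b) =
        (b + d).choose b * ((-1) ^ t * d.choose t) := fun t _ => by
    have h := Nat.choose_mul (n := b + d) (Nat.le_add_right b t)
    simp only [Nat.add_sub_cancel_left] at h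
    rw [show b + t + b = t + 2 * b by ring, pow_add, pow_mul, neg_one_sq, one_pow, mul_one,
      ← Nat.cast_mul, h]
    push_cast
    ring
  rw [show b + d + 1 = b + (d + 1) by ring, sum_range_add, sum_eq_zero below, zero_add,
    sum_congr rfl above, ← mul_sum, Int.alternating_sum_range_choose]
  by_cases hd : d = 0 <;> simp [hd]

section Pascal

variable (R : Type*) [Ring R] (n : ℕ)

def pascalMatrix : Matrix (Fin n) (Fin n) R :=
  of fun i j => ((i : ℕ).choose j : R)

def signedPascalMatrix : Matrix (Fin n) (Fin n) R :=
  of fun i j => (-1 : R) ^ ((i : ℕ) + j) * ((i : ℕ).choose j : R)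

theorem pascalMatrix_mul_signedPascalMatrix :
    pascalMatrix R n * signedPascalMatrix R n = 1 := by
  ext i k
  have vanish : ∀ j ∈ range n, j ∉ range (i + 1) →
      ((-1 : ℤ) ^ (j + k) * ((i : ℕ).choose j * j.choose k) : ℤ) = 0 := fun j _ hj => by
    rw [Nat.choose_eq_zero_of_lt (by simpa using hj)]
    simp
  have orthogonality := sum_range_neg_one_pow_mul_choose_mul_choose i k
  rw [sum_subset (range_subset_range.mpr i.isLt) vanish, ← Fin.sum_univ_eq_sum_range
    (fun j => (-1 : ℤ) ^ (j + k) * ((i : ℕ).choose j * j.choose k))] at orthogonality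
  have hcast := congrArg (Int.cast : ℤ → R) orthogonality
  push_cast at hcast
  simp only [mul_apply, pascalMatrix, signedPascalMatrix, of_apply, one_apply, Fin.ext_iff]
  rw [← hcast]
  exact sum_congr rfl fun j _ => ((Commute.neg_one_right _).pow_right _).left_comm _

theorem pascalMatrix_rev_mul_signedPascalMatrix_rev :
    (pascalMatrix R n).submatrix Fin.rev id * (signedPascalMatrix R n).submatrix id Fin.rev = 1 := by
  rw [← submatrix_mul _ _ _ _ _ Function.bijective_id, pascalMatrix_mul_signedPascalMatrix,
    submatrix_one _ Fin.rev_injective]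

end Pascal

/-- The anti-triangular binomial matrix `U_n` is invertible with
`(U_n⁻¹)_{i,j} = (-1)^{n+1+i+j} (U_n)_{n+1-i, n+1-j}` (1-based indices). -/
theorem binom_matrix_inverse (n : ℕ) (U : Matrix (Fin n) (Fin n) ℝ)
    (hU : ∀ i j : Fin n, U i j =
      if (i : ℕ) + 1 + ((j : ℕ) + 1) ≤ n + 1 then
        (Nat.choose (n - ((i : ℕ) + 1)) ((j : ℕ) + 1 - 1) : ℝ)
      else 0) :
    IsUnit U ∧ ∀ i j : Fin n,
      U⁻¹ i j = (-1 : ℝ) ^ (n + 1 + ((i : ℕ) + 1) + ((j : ℕ) + 1)) * U i.rev j.rev := by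
  have hUP : U = (pascalMatrix ℝ n).submatrix Fin.rev id := by
    ext i j
    rw [hU, submatrix_apply, pascalMatrix, of_apply, Fin.val_rev, id, Nat.add_sub_cancel]
    split_ifs with h
    · rfl
    · rw [Nat.choose_eq_zero_of_lt (by omega), Nat.cast_zero]
  have hmul := pascalMatrix_rev_mul_signedPascalMatrix_rev ℝ n
  rw [← hUP] at hmul
  refine ⟨IsUnit.of_mul_eq_one _ hmul, fun i j => ?_⟩
  rw [inv_eq_right_inv hmul, hUP]
  simp only [submatrix_apply, id, pascalMatrix, signedPascalMatrix, of_apply, Fin.rev_rev]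
  rw [show n + 1 + ((i : ℕ) + 1) + ((j : ℕ) + 1) = (i : ℕ) + j.rev + 2 * ((j : ℕ) + 2) by
    rw [Fin.val_rev]; omega, pow_add _ _ (2 * _), pow_mul, neg_one_sq, one_pow, mul_one]
end

section
/- Let Q be a probability measure on a finite product of measurable spaces Ω₁ × ... × Ω_m with marginals Q_i on Ω_i, and let P = Q₁ ⊗ ... ⊗ Q_m be the corresponding product measure. Suppose h is a measurable function on the product space with |h| ≤ K, and suppose that for each i, the total-variation-type mixing coefficient between the first i coordinates and the (i+1)-st coordinate under Q is at most β. Then |E_Q[h] - E_P[h]| ≤ 2(m-1)Kβ. -/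
/-!
Peel off the last coordinate. Disintegrate `Q` along the split (first `m - 1` coordinates, last
coordinate): replacing the conditional law of the last coordinate by its marginal changes `∫ h ∂Q`
by at most `2K` times the expected total variation distance between the two, which is
`β_{m-1} ≤ β`. What remains is the same comparison for the first `m - 1` coordinates, applied to
`h` integrated in its last variable against the last marginal; that function is again bounded by
`K`, so induction on `m` gives `2(m-1)Kβ`.
-/

open MeasureTheory ProbabilityTheory
open scoped symmDiff

universe u

section TVDist

variable {β : Type*} [MeasurableSpace β]

noncomputable def tvDist (μ ν : Measure β) : ℝ :=
  ⨆ (A : Set β) (_ : MeasurableSet A), |μ.real A - ν.real A|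

lemma tvDist_nonneg (μ ν : Measure β) : 0 ≤ tvDist μ ν :=
  Real.iSup_nonneg fun _ => Real.iSup_nonneg fun _ => abs_nonneg _

variable (μ ν : Measure β) [IsFiniteMeasure μ] [IsFiniteMeasure ν]

lemma abs_measureReal_sub_le_measureReal_univ_add (A : Set β) :
    |μ.real A - ν.real A| ≤ μ.real .univ + ν.real .univ := by
  have hμ := measureReal_mono (μ := μ) (Set.subset_univ A)
  have hν := measureReal_mono (μ := ν) (Set.subset_univ A)
  rw [abs_le]
  constructor <;> linarith [measureReal_nonneg (μ := μ) (s := A),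
    measureReal_nonneg (μ := ν) (s := A)]

lemma tvDist_le_measureReal_univ_add : tvDist μ ν ≤ μ.real .univ + ν.real .univ :=
  Real.iSup_le (fun A => Real.iSup_le
    (fun _ => abs_measureReal_sub_le_measureReal_univ_add μ ν A) (by positivity)) (by positivity)

variable {μ ν}

lemma abs_measureReal_sub_le_tvDist {A : Set β} (hA : MeasurableSet A) :
    |μ.real A - ν.real A| ≤ tvDist μ ν := by
  refine le_ciSup_of_le ⟨_, Set.forall_mem_range.2 fun B => Real.iSup_le
    (fun _ => abs_measureReal_sub_le_measureReal_univ_add μ ν B) (by positivity)⟩ A ?_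
  rw [ciSup_pos hA]

lemma integral_abs_toReal_rnDeriv_sub_le_two_mul_tvDist {ρ : Measure β} [SigmaFinite ρ]
    (hμ : μ ≪ ρ) (hν : ν ≪ ρ) :
    ∫ x, |(μ.rnDeriv ρ x).toReal - (ν.rnDeriv ρ x).toReal| ∂ρ ≤ 2 * tvDist μ ν := by
  set g₁ := fun x => (μ.rnDeriv ρ x).toReal
  set g₂ := fun x => (ν.rnDeriv ρ x).toReal
  have ig₁ : Integrable g₁ ρ := Measure.integrable_toReal_rnDeriv
  have ig₂ : Integrable g₂ ρ := Measure.integrable_toReal_rnDeriv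
  -- a Hahn set for `μ - ν`
  set B := {x | g₂ x ≤ g₁ x}
  have hB : MeasurableSet B :=
    measurableSet_le (Measure.measurable_rnDeriv ν ρ).ennreal_toReal
      (Measure.measurable_rnDeriv μ ρ).ennreal_toReal
  have on_B : ∫ x in B, |g₁ x - g₂ x| ∂ρ = μ.real B - ν.real B := by
    rw [setIntegral_congr_fun hB fun x hx => abs_of_nonneg (sub_nonneg.2 hx),
      integral_sub ig₁.integrableOn ig₂.integrableOn, Measure.setIntegral_toReal_rnDeriv hμ,
      Measure.setIntegral_toReal_rnDeriv hν]
  have on_Bc : ∫ x in Bᶜ, |g₁ x - g₂ x| ∂ρ = ν.real Bᶜ - μ.real Bᶜ := by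
    rw [setIntegral_congr_fun hB.compl fun x hx =>
        abs_of_neg (sub_neg.2 (lt_of_not_ge (show ¬g₂ x ≤ g₁ x from hx))),
      integral_neg, integral_sub ig₁.integrableOn ig₂.integrableOn,
      Measure.setIntegral_toReal_rnDeriv hμ, Measure.setIntegral_toReal_rnDeriv hν, neg_sub]
  have hint : Integrable (fun x => |g₁ x - g₂ x|) ρ := (ig₁.sub ig₂).abs
  change ∫ x, |g₁ x - g₂ x| ∂ρ ≤ _
  rw [← integral_add_compl hB hint, on_B, on_Bc]
  have h₁ := (le_abs_self _).trans (abs_measureReal_sub_le_tvDist (μ := μ) (ν := ν) hB)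
  have h₂ := (neg_le_abs _).trans (abs_measureReal_sub_le_tvDist (μ := μ) (ν := ν) hB.compl)
  linarith

lemma abs_integral_sub_integral_le_two_mul_tvDist {f : β → ℝ} (hf : Measurable f) {K : ℝ}
    (hK : 0 ≤ K) (hfK : ∀ x, |f x| ≤ K) :
    |∫ x, f x ∂μ - ∫ x, f x ∂ν| ≤ 2 * K * tvDist μ ν := by
  have hμ : μ ≪ μ + ν := Measure.AbsolutelyContinuous.rfl.add_right ν
  have hν : ν ≪ μ + ν := Measure.AbsolutelyContinuous.rfl.add_right' μ
  set g₁ := fun x => (μ.rnDeriv (μ + ν) x).toReal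
  set g₂ := fun x => (ν.rnDeriv (μ + ν) x).toReal
  have hf_bdd : ∀ᵐ x ∂(μ + ν), ‖f x‖ ≤ K := .of_forall hfK
  have weighted {σ : Measure β} [IsFiniteMeasure σ] (hσ : σ ≪ μ + ν) :
      ∫ x, f x ∂σ = ∫ x, (σ.rnDeriv (μ + ν) x).toReal * f x ∂(μ + ν) := by
    simp_rw [← smul_eq_mul, integral_rnDeriv_smul hσ]
  rw [weighted hμ, weighted hν, ← integral_sub
    (Measure.integrable_toReal_rnDeriv.mul_bdd hf.aestronglyMeasurable hf_bdd)
    (Measure.integrable_toReal_rnDeriv.mul_bdd hf.aestronglyMeasurable hf_bdd)]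
  calc |∫ x, g₁ x * f x - g₂ x * f x ∂(μ + ν)|
      ≤ ∫ x, |g₁ x - g₂ x| * K ∂(μ + ν) := by
        refine abs_integral_le_integral_abs.trans (integral_mono_of_nonneg
          (.of_forall fun _ => abs_nonneg _)
          ((Measure.integrable_toReal_rnDeriv.sub
            Measure.integrable_toReal_rnDeriv).abs.mul_const K)
          (.of_forall fun x => ?_))
        change |g₁ x * f x - g₂ x * f x| ≤ |g₁ x - g₂ x| * K
        rw [← sub_mul, abs_mul]
        exact mul_le_mul_of_nonneg_left (hfK x) (abs_nonneg _)
    _ ≤ 2 * tvDist μ ν * K := by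
        rw [integral_mul_const]
        exact mul_le_mul_of_nonneg_right
          (integral_abs_toReal_rnDeriv_sub_le_two_mul_tvDist hμ hν) hK
    _ = 2 * K * tvDist μ ν := by ring

end TVDist

section CountablyGenerated

open MeasurableSpace

variable {β : Type*} [MeasurableSpace β] [CountablyGenerated β]

lemma generateFrom_generateSetAlgebra_countableGeneratingSet :
    generateFrom (generateSetAlgebra (countableGeneratingSet β)) = ‹MeasurableSpace β› := by
  rw [generateFrom_generateSetAlgebra_eq, generateFrom_countableGeneratingSet]

lemma tvDist_eq_iSup_generateSetAlgebra (μ ν : Measure β) [IsFiniteMeasure μ]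
    [IsFiniteMeasure ν] :
    tvDist μ ν = ⨆ t : generateSetAlgebra (countableGeneratingSet β), |μ.real t - ν.real t| := by
  set 𝒜 := generateSetAlgebra (countableGeneratingSet β)
  have h𝒜 := Measure.MeasureDense.of_generateFrom_isSetAlgebra_finite (μ + ν)
    isSetAlgebra_generateSetAlgebra generateFrom_generateSetAlgebra_countableGeneratingSet.symm
  have hbdd : BddAbove (Set.range fun t : 𝒜 => |μ.real t - ν.real t|) :=
    ⟨_, Set.forall_mem_range.2 fun t => abs_measureReal_sub_le_measureReal_univ_add μ ν t⟩
  have hnonneg : 0 ≤ ⨆ t : 𝒜, |μ.real t - ν.real t| := Real.iSup_nonneg fun _ => abs_nonneg _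
  refine le_antisymm (Real.iSup_le (fun A => Real.iSup_le (fun hA => ?_) hnonneg) hnonneg)
    (Real.iSup_le (fun t => abs_measureReal_sub_le_tvDist (h𝒜.measurable t t.2))
      (tvDist_nonneg μ ν))
  refine le_of_forall_pos_le_add fun ε hε => ?_
  obtain ⟨t, ht, hAt⟩ := h𝒜.approx A hA (measure_ne_top _ _) ε hε
  have hAt' : μ.real (A ∆ t) + ν.real (A ∆ t) ≤ ε := by
    rw [← measureReal_add_apply]
    exact ENNReal.toReal_le_of_le_ofReal hε.le hAt.le
  have hμ := abs_measureReal_sub_le_measureReal_symmDiff (μ := μ) hA.nullMeasurableSet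
    (h𝒜.measurable t ht).nullMeasurableSet
  have hν := abs_measureReal_sub_le_measureReal_symmDiff (μ := ν) hA.nullMeasurableSet
    (h𝒜.measurable t ht).nullMeasurableSet
  have ht_le : |μ.real t - ν.real t| ≤ _ := le_ciSup hbdd ⟨t, ht⟩
  rw [abs_le] at hμ hν ht_le ⊢
  constructor <;> linarith

lemma measurable_tvDist_kernel {α : Type*} [MeasurableSpace α] (κ : Kernel α β) [IsFiniteKernel κ]
    (ν : Measure β) [IsFiniteMeasure ν] :
    Measurable fun x => tvDist (κ x) ν := by
  have : Countable (generateSetAlgebra (countableGeneratingSet β)) :=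
    (countable_generateSetAlgebra countable_countableGeneratingSet).to_subtype
  simp_rw [tvDist_eq_iSup_generateSetAlgebra]
  refine Measurable.iSup fun t => ((κ.measurable_coe ?_).ennreal_toReal.sub measurable_const).abs
  exact generateFrom_generateSetAlgebra_countableGeneratingSet.le _ (measurableSet_generateFrom t.2)

end CountablyGenerated

section BetaMixing

variable {α β : Type*} [MeasurableSpace α] [MeasurableSpace β] [StandardBorelSpace β] [Nonempty β]

/-- The paper's `β_i` is
`betaMixingCoeff (Q.map (splitPrefix i hi)) (Q.map fun ω => ω ⟨i + 1, hi⟩)`. -/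
noncomputable def betaMixingCoeff (ρ : Measure (α × β)) [IsFiniteMeasure ρ] (ν : Measure β) : ℝ :=
  ∫ x, tvDist (ρ.condKernel x) ν ∂ρ.fst

lemma abs_integral_sub_integral_fst_prod_le (ρ : Measure (α × β)) [IsFiniteMeasure ρ]
    (ν : Measure β) [IsFiniteMeasure ν] {g : α × β → ℝ} (hg : Measurable g) {K : ℝ}
    (hK : 0 ≤ K) (hgK : ∀ p, |g p| ≤ K) :
    |∫ p, g p ∂ρ - ∫ p, g p ∂(ρ.fst.prod ν)| ≤ 2 * K * betaMixingCoeff ρ ν := by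
  have hg_int {σ : Measure (α × β)} [IsFiniteMeasure σ] : Integrable g σ :=
    .of_bound hg.aestronglyMeasurable K (.of_forall hgK)
  have htv : Integrable (fun x => tvDist (ρ.condKernel x) ν) ρ.fst :=
    .of_bound (measurable_tvDist_kernel _ ν).aestronglyMeasurable (1 + ν.real .univ)
      (.of_forall fun x => by
        rw [Real.norm_of_nonneg (tvDist_nonneg _ _), ← probReal_univ (μ := ρ.condKernel x)]
        exact tvDist_le_measureReal_univ_add _ _)
  rw [← Measure.integral_condKernel hg_int, integral_prod g hg_int,
    ← integral_sub hg_int.integral_condKernel hg_int.integral_prod_left, betaMixingCoeff,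
    ← integral_const_mul]
  refine abs_integral_le_integral_abs.trans (integral_mono_of_nonneg
    (.of_forall fun _ => abs_nonneg _) (htv.const_mul _) (.of_forall fun x => ?_))
  exact abs_integral_sub_integral_le_two_mul_tvDist (hg.comp measurable_prodMk_left) hK
    fun y => hgK (x, y)

end BetaMixing

section FinTuple

variable {n : ℕ} {Ω : Fin (n + 1) → Type*} [∀ i, MeasurableSpace (Ω i)]

lemma measurable_fin_init : Measurable (Fin.init (α := Ω)) :=
  measurable_pi_lambda _ fun _ => measurable_pi_apply _

lemma measurable_fin_snoc :
    Measurable fun p : (∀ j : Fin n, Ω j.castSucc) × Ω (Fin.last n) => Fin.snoc p.1 p.2 := by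
  refine measurable_pi_lambda _ fun i => Fin.lastCases ?_ (fun j => ?_) i
  · simpa only [Fin.snoc_last] using measurable_snd
  · simpa only [Fin.snoc_castSucc] using measurable_fst.eval

lemma MeasureTheory.Measure.pi_eq_map_snoc (μ : ∀ i, Measure (Ω i)) [∀ i, SigmaFinite (μ i)] :
    Measure.pi μ = ((Measure.pi fun j => μ j.castSucc).prod (μ (Fin.last n))).map
      fun p => Fin.snoc p.1 p.2 := by
  refine Measure.pi_eq fun s hs => ?_
  have hpre : (fun p : (∀ j : Fin n, Ω j.castSucc) × Ω (Fin.last n) => Fin.snoc p.1 p.2) ⁻¹'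
      Set.univ.pi s = Set.univ.pi (fun j : Fin n => s j.castSucc) ×ˢ s (Fin.last n) := by
    ext p
    simp [Fin.forall_fin_succ']
  rw [Measure.map_apply measurable_fin_snoc (.univ_pi hs), hpre, Measure.prod_prod,
    Measure.pi_pi, Fin.prod_univ_castSucc]

lemma map_init_map_eval (Q : Measure (∀ i, Ω i)) (j : Fin n) :
    (Q.map Fin.init).map (fun x => x j) = Q.map fun ω => ω j.castSucc := by
  rw [Measure.map_map (measurable_pi_apply _) measurable_fin_init]
  rfl

end FinTuple

lemma MeasureTheory.Measure.pi_map_eval_eq_self {ι : Type*} [Fintype ι] [Unique ι]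
    {Ω : ι → Type*} [∀ i, MeasurableSpace (Ω i)] (Q : Measure (∀ i, Ω i)) [IsFiniteMeasure Q] :
    Measure.pi (fun i => Q.map fun ω => ω i) = Q := by
  refine Measure.pi_eq fun s hs => ?_
  rw [Fintype.prod_unique, Measure.map_apply (measurable_pi_apply _) (hs _)]
  congr 1
  ext ω
  simp [Unique.forall_iff]

section SplitPrefix

variable {m : ℕ} {Ω : Fin m → Type*} [∀ i, MeasurableSpace (Ω i)]

def splitPrefix (i : ℕ) (hi : i + 1 < m) (ω : ∀ j, Ω j) :
    (∀ j : Fin (i + 1), Ω (j.castLE hi.le)) × Ω ⟨i + 1, hi⟩ :=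
  (fun j => ω (j.castLE hi.le), ω ⟨i + 1, hi⟩)

lemma measurable_splitPrefix (i : ℕ) (hi : i + 1 < m) :
    Measurable (splitPrefix (Ω := Ω) i hi) :=
  (measurable_pi_lambda _ fun _ => measurable_pi_apply _).prodMk (measurable_pi_apply _)

end SplitPrefix

section LastCoordinate

variable {n : ℕ} {Ω : Fin (n + 2) → Type*} [∀ i, MeasurableSpace (Ω i)]

lemma betaMixingCoeff_map_init [∀ i, StandardBorelSpace (Ω i)] [∀ i, Nonempty (Ω i)]
    (Q : Measure (∀ i, Ω i)) [IsFiniteMeasure Q] (i : ℕ) (hi : i + 1 < n + 1) :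
    betaMixingCoeff ((Q.map Fin.init).map (splitPrefix i hi))
        ((Q.map Fin.init).map fun ω => ω ⟨i + 1, hi⟩) =
      betaMixingCoeff (Q.map (splitPrefix i (Nat.lt_succ_of_lt hi)))
        (Q.map fun ω => ω ⟨i + 1, Nat.lt_succ_of_lt hi⟩) := by
  simp only [Measure.map_map (measurable_splitPrefix i hi) measurable_fin_init,
    Measure.map_map (measurable_pi_apply _) measurable_fin_init]
  rfl

lemma integral_pi_map_eval_eq_integral_init_snoc (Q : Measure (∀ i, Ω i)) [IsFiniteMeasure Q]
    {h : (∀ i, Ω i) → ℝ} (hh : Integrable h (Measure.pi fun i => Q.map fun ω => ω i)) :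
    ∫ ω, h ω ∂(Measure.pi fun i => Q.map fun ω => ω i) =
      ∫ x, ∫ y, h (Fin.snoc x y) ∂(Q.map fun ω => ω (Fin.last _))
        ∂(Measure.pi fun j => (Q.map Fin.init).map fun x => x j) := by
  rw [Measure.pi_eq_map_snoc] at hh ⊢
  rw [integral_map measurable_fin_snoc.aemeasurable hh.aestronglyMeasurable,
    integral_prod (fun p => h (Fin.snoc p.1 p.2)) (hh.comp_measurable measurable_fin_snoc)]
  simp_rw [map_init_map_eval]

lemma abs_integral_sub_integral_init_snoc_le [∀ i, StandardBorelSpace (Ω i)] [∀ i, Nonempty (Ω i)]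
    (Q : Measure (∀ i, Ω i)) [IsFiniteMeasure Q] {h : (∀ i, Ω i) → ℝ} (hh : Measurable h)
    {K : ℝ} (hK : 0 ≤ K) (hhK : ∀ ω, |h ω| ≤ K) :
    |∫ ω, h ω ∂Q - ∫ x, ∫ y, h (Fin.snoc x y) ∂(Q.map fun ω => ω (Fin.last _)) ∂(Q.map Fin.init)|
      ≤ 2 * K * betaMixingCoeff (Q.map fun ω => (Fin.init ω, ω (Fin.last _)))
        (Q.map fun ω => ω (Fin.last _)) := by
  have hsplit : Measurable fun ω : ∀ i, Ω i => (Fin.init ω, ω (Fin.last _)) :=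
    measurable_fin_init.prodMk (measurable_pi_apply _)
  set ρ := Q.map fun ω => (Fin.init ω, ω (Fin.last _))
  have hg : Measurable fun p : (∀ j : Fin (n + 1), Ω j.castSucc) × Ω (Fin.last _) =>
      h (Fin.snoc p.1 p.2) := hh.comp measurable_fin_snoc
  have hρ_fst : ρ.fst = Q.map Fin.init := by
    rw [Measure.fst, Measure.map_map measurable_fst hsplit]
    rfl
  have hQ : ∫ ω, h ω ∂Q = ∫ p, h (Fin.snoc p.1 p.2) ∂ρ := by
    rw [integral_map hsplit.aemeasurable hg.aestronglyMeasurable]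
    simp [Fin.snoc_init_self]
  rw [hQ, ← hρ_fst, ← integral_prod _ (.of_bound hg.aestronglyMeasurable K
    (.of_forall fun _ => hhK _))]
  exact abs_integral_sub_integral_fst_prod_le ρ _ hg hK fun _ => hhK _

end LastCoordinate

theorem abs_integral_sub_integral_pi_map_eval_le {k : ℕ} {Ω : Fin (k + 1) → Type*}
    [∀ i, MeasurableSpace (Ω i)] [∀ i, StandardBorelSpace (Ω i)] [∀ i, Nonempty (Ω i)]
    (Q : Measure (∀ i, Ω i)) [IsProbabilityMeasure Q] {h : (∀ i, Ω i) → ℝ} (hh : Measurable h)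
    {K : ℝ} (hK : 0 ≤ K) (hhK : ∀ ω, |h ω| ≤ K) {β : ℝ}
    (hmix : ∀ (i : ℕ) (hi : i + 1 < k + 1),
      betaMixingCoeff (Q.map (splitPrefix i hi)) (Q.map fun ω => ω ⟨i + 1, hi⟩) ≤ β) :
    |∫ ω, h ω ∂Q - ∫ ω, h ω ∂(Measure.pi fun i => Q.map fun ω => ω i)| ≤ 2 * k * K * β := by
  induction k with
  | zero => simp [Measure.pi_map_eval_eq_self]
  | succ k ih =>
    set ν := Q.map fun ω => ω (Fin.last (k + 1))
    have : IsProbabilityMeasure ν :=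
      Measure.isProbabilityMeasure_map (measurable_pi_apply _).aemeasurable
    have : IsProbabilityMeasure (Q.map Fin.init) :=
      Measure.isProbabilityMeasure_map measurable_fin_init.aemeasurable
    set G := fun x => ∫ y, h (Fin.snoc x y) ∂ν
    have hG : Measurable G :=
      (hh.comp measurable_fin_snoc).stronglyMeasurable.integral_prod_right'.measurable
    have hGK (x) : |G x| ≤ K := by
      simpa using norm_integral_le_of_norm_le_const (μ := ν) (f := fun y => h (Fin.snoc x y))
        (.of_forall fun y => hhK _)
    -- `splitPrefix k _` is definitionally `fun ω => (Fin.init ω, ω (Fin.last _))`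
    have last_step := (abs_integral_sub_integral_init_snoc_le Q hh hK hhK).trans
      (mul_le_mul_of_nonneg_left (hmix k (by omega)) (by positivity))
    have init_steps := ih (Q.map Fin.init) hG hGK fun i hi =>
      (betaMixingCoeff_map_init Q i hi).trans_le (hmix i (by omega))
    rw [integral_pi_map_eval_eq_integral_init_snoc Q
      (.of_bound hh.aestronglyMeasurable K (.of_forall hhK))]
    calc _ ≤ 2 * K * β + 2 * k * K * β := (abs_sub_le _ _ _).trans (add_le_add last_step init_steps)
      _ = 2 * (k + 1 : ℕ) * K * β := by push_cast; ring

/-- Yu's lemma: if `Q` is a joint law on a finite product whose successive conditional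
distributions are within total variation `β` (in expectation) of the marginals, then the
expectation of a bounded measurable `h` under `Q` and under the product of marginals `P`
differ by at most `2(m-1)Kβ`. -/
theorem yu_lemma (m : ℕ) (hm : 1 ≤ m) (Ω : Fin m → Type u)
    [∀ i, MeasurableSpace (Ω i)] [∀ i, StandardBorelSpace (Ω i)] [∀ i, Nonempty (Ω i)]
    (Q : Measure (∀ i, Ω i)) [IsProbabilityMeasure Q]
    (P : Measure (∀ i, Ω i)) (hP : P = Measure.pi (fun i => Q.map (fun ω => ω i)))
    (h : (∀ i, Ω i) → ℝ) (hmeas : Measurable h) (K : ℝ) (hK : 0 ≤ K)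
    (hbd : ∀ ω, |h ω| ≤ K) (β : ℝ)
    (hmix : ∀ (i : ℕ) (hi : i + 1 < m),
      (∫ x, (⨆ (A : Set (Ω ⟨i + 1, hi⟩)) (_ : MeasurableSet A),
          |(((Q.map (fun ω =>
                (((fun j : Fin (i + 1) => ω (j.castLE (by omega))),
                  ω ⟨i + 1, hi⟩) :
                  ((j : Fin (i + 1)) → Ω (j.castLE (by omega))) × Ω ⟨i + 1, hi⟩))).condKernel
              x) A).toReal
            - ((Q.map (fun ω => ω ⟨i + 1, hi⟩)) A).toReal|)
        ∂((Q.map (fun ω =>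
            (((fun j : Fin (i + 1) => ω (j.castLE (by omega))),
              ω ⟨i + 1, hi⟩) :
              ((j : Fin (i + 1)) → Ω (j.castLE (by omega))) × Ω ⟨i + 1, hi⟩))).fst)) ≤ β) :
    |(∫ ω, h ω ∂Q) - ∫ ω, h ω ∂P| ≤ 2 * ((m : ℝ) - 1) * K * β := by
  subst hP
  obtain ⟨k, rfl⟩ : ∃ k, m = k + 1 := ⟨m - 1, by omega⟩
  simpa using abs_integral_sub_integral_pi_map_eval_le Q hmeas hK hbd hmix
end

section
/- Let τ₁, ..., τ_m be i.i.d. Rademacher variables, G a finite set of functions on points B₁, ..., B_m with values in ℝ, and K > 0 with |g(Bᵢ)| ≤ 4K² for all g ∈ G, i. Then E_τ[ sup_{g ∈ G} (1/m) Σᵢ τᵢ g(Bᵢ) - 1/(8K²m) Σᵢ g(Bᵢ)² ] ≤ (4K²/m) log|G|. -/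
open MeasureTheory Finset
open scoped ENNReal

noncomputable def sgnOf (m : ℕ) (s : Fin m → Bool) : Fin m → ℝ := fun i => if s i then 1 else -1

lemma pi_rademacher_eq_sum (m : ℕ) :
    Measure.pi (fun _ : Fin m =>
        ((1 / 2 : ℝ≥0∞) • Measure.dirac (1 : ℝ) + (1 / 2 : ℝ≥0∞) • Measure.dirac (-1 : ℝ))) =
      ∑ s : Fin m → Bool, ((1 / 2 : ℝ≥0∞) ^ m) • Measure.dirac (sgnOf m s) := by
  classical
  have hfin : IsFiniteMeasure
      ((1 / 2 : ℝ≥0∞) • Measure.dirac (1 : ℝ) + (1 / 2 : ℝ≥0∞) • Measure.dirac (-1 : ℝ)) := by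
    constructor
    simp [Measure.add_apply, Measure.smul_apply]
  have : ∀ _i : Fin m, SigmaFinite
      ((1 / 2 : ℝ≥0∞) • Measure.dirac (1 : ℝ) + (1 / 2 : ℝ≥0∞) • Measure.dirac (-1 : ℝ)) :=
    fun _ => inferInstance
  refine Measure.pi_eq fun A hA => ?_
  have hAm : MeasurableSet (Set.pi Set.univ A) := MeasurableSet.univ_pi hA
  rw [Measure.finset_sum_apply]
  have h1 : ∀ s : Fin m → Bool,
      (((1 / 2 : ℝ≥0∞) ^ m) • Measure.dirac (sgnOf m s)) (Set.pi Set.univ A)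
        = ∏ i : Fin m,
            ((1 / 2 : ℝ≥0∞) * (if (if s i then (1:ℝ) else -1) ∈ A i then 1 else 0)) := by
    intro s
    rw [Measure.smul_apply, Measure.dirac_apply' _ hAm, smul_eq_mul,
      Finset.prod_mul_distrib, Finset.prod_const, Finset.prod_boole, Finset.card_univ,
      Fintype.card_fin]
    simp [Set.indicator_apply, Set.mem_univ_pi, sgnOf]
  simp_rw [h1]
  rw [← Fintype.prod_sum (f := fun (i : Fin m) (b : Bool) =>
      (1 / 2 : ℝ≥0∞) * (if (if b then (1:ℝ) else -1) ∈ A i then 1 else 0))]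
  refine (Finset.prod_congr rfl fun i _ => ?_).symm
  rw [Fintype.sum_bool]
  rw [Measure.add_apply, Measure.smul_apply, Measure.smul_apply,
    Measure.dirac_apply' _ (hA i), Measure.dirac_apply' _ (hA i)]
  simp [Set.indicator_apply]

lemma integral_sum_dirac_sgn {m : ℕ} (f : (Fin m → ℝ) → ℝ) :
    (∫ τ, f τ ∂(∑ s : Fin m → Bool, ((1 / 2 : ℝ≥0∞) ^ m) • Measure.dirac (sgnOf m s)))
      = ∑ s : Fin m → Bool, (1 / 2 : ℝ) ^ m * f (sgnOf m s) := by
  rw [integral_finset_sum_measure]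
  · refine Finset.sum_congr rfl fun s _ => ?_
    rw [integral_smul_measure, integral_dirac, smul_eq_mul]
    norm_num [ENNReal.toReal_pow]
  · intro s _
    refine Integrable.smul_measure ?_ (by norm_num)
    exact (integrable_const (f (sgnOf m s))).congr (MeasureTheory.ae_eq_dirac f).symm

noncomputable def offF {α : Type*} (m : ℕ) (B : Fin m → α) (K : ℝ) (g : α → ℝ)
    (τ : Fin m → ℝ) : ℝ :=
  (1 / m : ℝ) * ∑ i, τ i * g (B i) - (1 / (8 * K ^ 2 * m)) * ∑ i, (g (B i)) ^ 2

lemma jensen_sum_aux {ι : Type*} [Fintype ι] (w : ℝ) (hw0 : 0 ≤ w)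
    (hwsum : ∑ _i : ι, w = (1:ℝ)) (X : ι → ℝ) (L : ℝ) :
    Real.exp (L * ∑ i, w * X i) ≤ ∑ i, w * Real.exp (L * X i) := by
  have hrw : L * ∑ i, w * X i = ∑ i : ι, w • (L * X i) := by
    rw [Finset.mul_sum]
    exact Finset.sum_congr rfl fun i _ => by simp only [smul_eq_mul]; ring
  rw [hrw]
  have := convexOn_exp.map_sum_le (t := Finset.univ)
    (w := fun _ : ι => w) (p := fun i => L * X i)
    (fun _ _ => hw0) hwsum (fun _ _ => Set.mem_univ _)
  simpa [smul_eq_mul] using this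

lemma sup'_exp_le {β : Type*} (G : Finset β) (hG : G.Nonempty) (f : β → ℝ) (L : ℝ) :
    Real.exp (L * G.sup' hG f) ≤ ∑ g ∈ G, Real.exp (L * f g) := by
  obtain ⟨g₀, hg₀, hXe⟩ := Finset.exists_mem_eq_sup' hG f
  rw [hXe]
  exact Finset.single_le_sum (f := fun g => Real.exp (L * f g)) (fun g _ => (Real.exp_pos _).le) hg₀

lemma prod_bound_aux (m : ℕ) (hm : 0 < m) (K : ℝ) (hK : 0 < K) (a : Fin m → ℝ) :
    (∑ s : Fin m → Bool, (1/2:ℝ)^m * Real.exp (((m:ℝ) / (4*K^2)) *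
        ((1/m:ℝ) * ∑ i, sgnOf m s i * a i - (1/(8*K^2*m)) * ∑ i, a i ^ 2))) ≤ 1 := by
  have hm' : ((m:ℝ)) ≠ 0 := Nat.cast_ne_zero.mpr hm.ne'
  have hK' : K ≠ 0 := hK.ne'
  set L : ℝ := (m:ℝ) / (4*K^2) with hL
  set t : Fin m → ℝ := fun i => a i / (4 * K ^ 2) with ht
  set c' : ℝ := (∑ i, a i ^ 2) / (32 * K ^ 4) with hc'
  have key : ∀ s : Fin m → Bool,
      L * ((1/m:ℝ) * ∑ i, sgnOf m s i * a i - (1/(8*K^2*m)) * ∑ i, a i ^ 2)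
        = (∑ i, t i * sgnOf m s i) - c' := by
    intro s
    have e1 : L * ((1/m:ℝ) * ∑ i, sgnOf m s i * a i - (1/(8*K^2*m)) * ∑ i, a i ^ 2)
        = (L * (1 / m)) * ∑ i, sgnOf m s i * a i
            - (L * (1 / (8 * K ^ 2 * m))) * ∑ i, a i ^ 2 := by ring
    have e2 : L * (1 / m) = 1 / (4 * K ^ 2) := by rw [hL]; field_simp
    have e3 : L * (1 / (8 * K ^ 2 * m)) = 1 / (32 * K ^ 4) := by
      rw [hL]; field_simp; ring
    rw [e1, e2, e3, Finset.mul_sum]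
    congr 1
    · exact Finset.sum_congr rfl fun i _ => by rw [ht]; ring
    · rw [hc']; ring
  have step1 : (∑ s : Fin m → Bool, (1/2:ℝ)^m * Real.exp (L *
        ((1/m:ℝ) * ∑ i, sgnOf m s i * a i - (1/(8*K^2*m)) * ∑ i, a i ^ 2)))
      = (∑ s : Fin m → Bool,
          ∏ i, ((1/2:ℝ) * Real.exp (t i * (if s i then (1:ℝ) else -1)))) / Real.exp c' := by
    rw [Finset.sum_div]
    refine Finset.sum_congr rfl fun s _ => ?_
    rw [key s, Real.exp_sub, Real.exp_sum, Finset.prod_mul_distrib, Finset.prod_const,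
      Finset.card_univ, Fintype.card_fin]
    simp only [sgnOf]
    ring
  rw [step1, ← Fintype.prod_sum (f := fun (i : Fin m) (b : Bool) =>
      (1/2:ℝ) * Real.exp (t i * (if b then (1:ℝ) else -1)))]
  rw [div_le_one (Real.exp_pos _)]
  have coshe : ∀ i : Fin m,
      (∑ b : Bool, (1/2:ℝ) * Real.exp (t i * (if b then (1:ℝ) else -1)))
        = Real.cosh (t i) := by
    intro i
    rw [Fintype.sum_bool, Real.cosh_eq]
    norm_num
    ring
  calc (∏ i, ∑ b : Bool, (1/2:ℝ) * Real.exp (t i * (if b then (1:ℝ) else -1)))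
      = ∏ i, Real.cosh (t i) := Finset.prod_congr rfl fun i _ => coshe i
    _ ≤ ∏ i, Real.exp (t i ^ 2 / 2) :=
        Finset.prod_le_prod (fun i _ => (Real.cosh_pos (t i)).le)
          (fun i _ => Real.cosh_le_exp_half_sq _)
    _ = Real.exp (∑ i, t i ^ 2 / 2) := (Real.exp_sum _ _).symm
    _ = Real.exp c' := by
        congr 1
        rw [hc', Finset.sum_div]
        refine Finset.sum_congr rfl fun i _ => ?_
        show (a i / (4 * K ^ 2)) ^ 2 / 2 = a i ^ 2 / (32 * K ^ 4)
        rw [div_pow, div_div]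
        norm_num
        ring_nf

lemma offset_aux {α : Type*} (m : ℕ) (hm : 0 < m) (B : Fin m → α)
    (K : ℝ) (hK : 0 < K) (G : Finset (α → ℝ)) (hG : G.Nonempty) :
    (∑ s : Fin m → Bool, (1 / 2 : ℝ) ^ m * G.sup' hG (fun g => offF m B K g (sgnOf m s)))
      ≤ (4 * K ^ 2 / m) * Real.log G.card := by
  classical
  have hm' : ((m:ℝ)) ≠ 0 := Nat.cast_ne_zero.mpr hm.ne'
  have hK' : K ≠ 0 := hK.ne'
  set w : ℝ := (1/2:ℝ)^m with hw
  have hw0 : 0 ≤ w := by positivity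
  have hwsum : ∑ _s : Fin m → Bool, w = (1:ℝ) := by
    rw [Finset.sum_const, Finset.card_univ, nsmul_eq_mul]
    have : Fintype.card (Fin m → Bool) = 2 ^ m := by simp
    rw [this, hw]
    push_cast
    rw [← mul_pow]
    norm_num
  set L : ℝ := (m:ℝ) / (4*K^2) with hL
  have hL0 : 0 < L := by positivity
  set X : (Fin m → Bool) → ℝ := fun s => G.sup' hG (fun g => offF m B K g (sgnOf m s)) with hX
  have chain : Real.exp (L * ∑ s : Fin m → Bool, w * X s) ≤ (G.card : ℝ) := by
    calc Real.exp (L * ∑ s : Fin m → Bool, w * X s)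
        ≤ ∑ s : Fin m → Bool, w * Real.exp (L * X s) := jensen_sum_aux w hw0 hwsum X L
      _ ≤ ∑ s : Fin m → Bool, w * ∑ g ∈ G, Real.exp (L * offF m B K g (sgnOf m s)) := by
          refine Finset.sum_le_sum fun s _ => ?_
          exact mul_le_mul_of_nonneg_left (sup'_exp_le G hG _ L) hw0
      _ = ∑ g ∈ G, ∑ s : Fin m → Bool, w * Real.exp (L * offF m B K g (sgnOf m s)) := by
          simp_rw [Finset.mul_sum]
          rw [Finset.sum_comm]
      _ ≤ ∑ _g ∈ G, (1:ℝ) := by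
          refine Finset.sum_le_sum fun g _ => ?_
          exact prod_bound_aux m hm K hK (fun i => g (B i))
      _ = (G.card : ℝ) := by simp
  have hcard1 : (1:ℝ) ≤ (G.card : ℝ) := by exact_mod_cast hG.card_pos
  have hlog : L * ∑ s : Fin m → Bool, w * X s ≤ Real.log G.card :=
    (Real.le_log_iff_exp_le (by linarith)).mpr chain
  have hfin : (∑ s : Fin m → Bool, w * X s) ≤ Real.log G.card / L := by
    rw [le_div_iff₀ hL0]
    linarith [hlog]
  have heq : Real.log G.card / L = 4 * K ^ 2 / m * Real.log G.card := by
    rw [hL]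
    field_simp
  calc (∑ s : Fin m → Bool, w * X s) ≤ Real.log G.card / L := hfin
    _ = _ := heq

/-- Offset Rademacher complexity bound for a finite class `G`:
`E_τ[sup_{g ∈ G} (1/m) Σ τᵢ g(Bᵢ) - 1/(8K²m) Σ g(Bᵢ)²] ≤ (4K²/m) log |G|`. -/
theorem offset_rademacher_finite {α : Type*} (m : ℕ) (hm : 0 < m) (B : Fin m → α)
    (K : ℝ) (hK : 0 < K) (G : Finset (α → ℝ)) (hG : G.Nonempty)
    (hGbd : ∀ g ∈ G, ∀ i : Fin m, |g (B i)| ≤ 4 * K ^ 2)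
    (ν : Measure ℝ)
    (hν : ν = (1 / 2 : ℝ≥0∞) • Measure.dirac 1 + (1 / 2 : ℝ≥0∞) • Measure.dirac (-1)) :
    (∫ τ : Fin m → ℝ, G.sup' hG (fun g =>
        (1 / m : ℝ) * ∑ i, τ i * g (B i)
          - (1 / (8 * K ^ 2 * m)) * ∑ i, (g (B i)) ^ 2)
      ∂(Measure.pi fun _ : Fin m => ν)) ≤ (4 * K ^ 2 / m) * Real.log G.card := by
  subst hν
  calc (∫ τ : Fin m → ℝ, G.sup' hG (fun g =>
        (1 / m : ℝ) * ∑ i, τ i * g (B i)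
          - (1 / (8 * K ^ 2 * m)) * ∑ i, (g (B i)) ^ 2)
      ∂(Measure.pi fun _ : Fin m =>
        ((1 / 2 : ℝ≥0∞) • Measure.dirac 1 + (1 / 2 : ℝ≥0∞) • Measure.dirac (-1))))
      = ∑ s : Fin m → Bool, (1 / 2 : ℝ) ^ m * G.sup' hG (fun g => offF m B K g (sgnOf m s)) := by
        rw [pi_rademacher_eq_sum m]
        exact integral_sum_dirac_sgn (fun τ => G.sup' hG (fun g => offF m B K g τ))
    _ ≤ (4 * K ^ 2 / m) * Real.log G.card := offset_aux m hm B K hK G hG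
end
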